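/- arXiv:2405.12680 — 2 statements merged into one kernel-verified Lean document; each statement's English description precedes it below -/
import Mathlib

section
/- Let p be a prime and R a commutative ring. Every element of X(R) can be written as a (topologically convergent) sum Σ_{n=0}^∞ V^n⟨a_n⟩ for some sequence (a_n) in R. -/
/-- The Teichmüller sequence `⟨r⟩ = (r, r^p, r^{p^2}, ...)` in `R^ℕ`. -/
def teich (p : ℕ) {R : Type*} [CommRing R] (r : R) : ℕ → R := fun k => r ^ p ^ k

/-- The Verschiebung `V(r_0, r_1, ...) = p • (0, r_0, r_1, ...)` on `R^ℕ`. -/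
def Vmap (p : ℕ) {R : Type*} [CommRing R] : (ℕ → R) → (ℕ → R) :=
  fun r k => match k with
  | 0 => 0
  | m + 1 => (p : R) * r m

/-- `X(R)`: the closed subgroup of `R^ℕ` (product topology, `R` discrete)
generated by the elements `V^n⟨r⟩`. -/
def XR (p : ℕ) (R : Type*) [CommRing R] : AddSubgroup (ℕ → R) :=
  letI : TopologicalSpace R := ⊥
  haveI : DiscreteTopology R := ⟨rfl⟩
  (AddSubgroup.closure {x : ℕ → R | ∃ n r, x = (Vmap p)^[n] (teich p r)}).topologicalClosure

open Finset WittVector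

/-- ghost sum -/
def gh (p : ℕ) {R : Type*} [CommRing R] (a : ℕ → R) (k : ℕ) : R :=
  ∑ n ∈ Finset.range (k + 1), (p : R) ^ n * a n ^ p ^ (k - n)

lemma gh_zero (p : ℕ) {R : Type*} [CommRing R] (a : ℕ → R) : gh p a 0 = a 0 := by
  simp [gh]

lemma gh_congr (p : ℕ) {R : Type*} [CommRing R] {a b : ℕ → R} {k : ℕ}
    (h : ∀ n ≤ k, a n = b n) : gh p a k = gh p b k := by
  refine Finset.sum_congr rfl fun n hn => ?_
  rw [h n (by simpa [Nat.lt_succ_iff] using hn)]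

lemma gh_succ (p : ℕ) {R : Type*} [CommRing R] (a : ℕ → R) (m : ℕ) :
    gh p a (m + 1) = a 0 ^ p ^ (m + 1) + (p : R) * gh p (fun i => a (i + 1)) m := by
  rw [gh, Finset.sum_range_succ']
  rw [gh, Finset.mul_sum]
  simp only [pow_zero, one_mul, Nat.sub_zero]
  rw [add_comm]
  congr 1
  refine Finset.sum_congr rfl fun i _ => ?_
  rw [pow_succ, Nat.succ_sub_succ]
  ring

lemma key (p : ℕ) (hp : 0 < p) {R : Type*} [CommRing R] :
    ∀ (m t : ℕ) (c : ℕ → R), (∀ j < m, (p : R) ^ t * gh p c j = 0) →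
      ∃ r : R, (p : R) ^ t * gh p c m = (p : R) ^ (m + t) * r := by
  intro m
  induction m with
  | zero =>
    intro t c _
    exact ⟨c 0, by rw [gh_zero, zero_add]⟩
  | succ m ih =>
    intro t c h
    have h0 : (p : R) ^ t * c 0 = 0 := by
      have := h 0 (Nat.succ_pos _); rwa [gh_zero] at this
    have h0e : ∀ e : ℕ, 0 < e → (p : R) ^ t * c 0 ^ e = 0 := by
      intro e he
      obtain ⟨e', rfl⟩ := Nat.exists_eq_succ_of_ne_zero he.ne'
      rw [pow_succ, ← mul_assoc, mul_comm ((p : R) ^ t), mul_assoc, h0, mul_zero]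
    have h' : ∀ j < m, (p : R) ^ (t + 1) * gh p (fun i => c (i + 1)) j = 0 := by
      intro j hj
      have hh := h (j + 1) (by omega)
      rw [gh_succ, mul_add, h0e _ (pow_pos hp _), zero_add, ← mul_assoc, ← pow_succ] at hh
      exact hh
    obtain ⟨r, hr⟩ := ih (t + 1) (fun i => c (i + 1)) h'
    refine ⟨r, ?_⟩
    rw [gh_succ, mul_add, h0e _ (pow_pos hp _), zero_add, ← mul_assoc, ← pow_succ, hr]
    ring_nf

lemma iterV (p : ℕ) {R : Type*} [CommRing R] (y : ℕ → R) :
    ∀ n k, (Vmap p)^[n] y k = if n ≤ k then (p : R) ^ n * y (k - n) else 0 := by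
  intro n
  induction n with
  | zero => intro k; simp
  | succ n ih =>
    intro k
    rw [Function.iterate_succ_apply']
    match k with
    | 0 => simp [Vmap]
    | m + 1 =>
      show (p : R) * (Vmap p)^[n] y m = _
      rw [ih m, Nat.succ_sub_succ]
      by_cases h : n ≤ m
      · rw [if_pos h, if_pos (by omega), pow_succ]; ring
      · rw [if_neg h, if_neg (by omega), mul_zero]

lemma ghostMap_mk (p : ℕ) [Fact p.Prime] {R : Type*} [CommRing R] (a : ℕ → R) (k : ℕ) :
    WittVector.ghostMap (WittVector.mk p a) k = gh p a k := by
  rw [ghostMap_apply, ghostComponent_apply, WittVector.coeff_mk, aeval_wittPolynomial]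
  rfl

/-- Every element of `X(R)` is a topologically convergent sum `Σ_n V^n⟨a_n⟩`:
in the product topology (with `R` discrete) this amounts to the statement that
each coordinate `k` equals the corresponding coordinate of any sufficiently
large partial sum (the terms with `n > k` vanish in coordinate `k`). -/
theorem stmt_9 (p : ℕ) (hp : p.Prime) (R : Type*) [CommRing R] :
    ∀ x : ℕ → R, x ∈ XR p R → ∃ a : ℕ → R,
      ∀ k : ℕ, x k = (∑ n ∈ Finset.range (k + 1), (Vmap p)^[n] (teich p (a n))) k := by
  haveI : Fact p.Prime := ⟨hp⟩
  have hp0 : 0 < p := hp.pos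
  letI : TopologicalSpace R := ⊥
  haveI : DiscreteTopology R := ⟨rfl⟩
  intro x hx
  -- the subgroup S : image of the ghost map
  set Φ : WittVector p R →+ (ℕ → R) := (WittVector.ghostMap : WittVector p R →+* (ℕ → R)).toAddMonoidHom with hΦ
  set S : AddSubgroup (ℕ → R) := Φ.range with hS
  -- generators lie in S
  have hgen : {x : ℕ → R | ∃ n r, x = (Vmap p)^[n] (teich p r)} ⊆ (S : Set (ℕ → R)) := by
    rintro y ⟨n, r, rfl⟩
    refine ⟨WittVector.mk p (fun j => if j = n then r else 0), ?_⟩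
    funext k
    show WittVector.ghostMap _ k = _
    rw [ghostMap_mk, iterV]
    by_cases h : n ≤ k
    · rw [if_pos h, gh]
      rw [Finset.sum_eq_single n]
      · simp [teich]
      · intro b _ hb
        simp only [if_neg hb]
        rw [zero_pow (by positivity), mul_zero]
      · intro hn; exact absurd (Finset.mem_range.2 (by omega)) hn
    · rw [if_neg h, gh]
      refine Finset.sum_eq_zero fun b hb => ?_
      have hbn : b ≠ n := by simp only [Finset.mem_range] at hb; omega
      simp only [if_neg hbn]
      rw [zero_pow (by positivity), mul_zero]
  have hle : AddSubgroup.closure {x : ℕ → R | ∃ n r, x = (Vmap p)^[n] (teich p r)} ≤ S :=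
    AddSubgroup.closure_le S |>.2 hgen
  -- x is in the closure of the subgroup, so per-level approximation
  have hx' : x ∈ closure
      ((AddSubgroup.closure {x : ℕ → R | ∃ n r, x = (Vmap p)^[n] (teich p r)} :
        AddSubgroup (ℕ → R)) : Set (ℕ → R)) := hx
  have happrox : ∀ k : ℕ, ∃ b : ℕ → R, ∀ j ≤ k, x j = gh p b j := by
    intro k
    have hU : IsOpen {y : ℕ → R | ∀ j ≤ k, y j = x j} := by
      have : {y : ℕ → R | ∀ j ≤ k, y j = x j} =
          ⋂ j ∈ Finset.range (k + 1), (fun y : ℕ → R => y j) ⁻¹' {x j} := by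
        ext y
        simp [Nat.lt_succ_iff]
      rw [this]
      refine isOpen_biInter_finset fun j _ => ?_
      exact (continuous_apply j).isOpen_preimage _ (isOpen_discrete _)
    have hmem : x ∈ {y : ℕ → R | ∀ j ≤ k, y j = x j} := fun j _ => rfl
    obtain ⟨y, hy1, hy2⟩ := mem_closure_iff.1 hx' _ hU hmem
    obtain ⟨B, hB⟩ := hle hy2
    refine ⟨B.coeff, fun j hj => ?_⟩
    have hmk : WittVector.mk p B.coeff = B := by
      apply WittVector.ext; intro i; rw [WittVector.coeff_mk]
    have h4 : WittVector.ghostMap B j = gh p B.coeff j := by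
      conv_lhs => rw [← hmk]
      exact ghostMap_mk p B.coeff j
    rw [← hy1 j hj, ← hB]
    exact h4
  -- extension step
  have step : ∀ (k : ℕ) (a : ℕ → R), (∀ j ≤ k, x j = gh p a j) →
      ∃ a' : ℕ → R, (∀ n ≤ k, a' n = a n) ∧ ∀ j ≤ k + 1, x j = gh p a' j := by
    intro k a ha
    obtain ⟨b, hb⟩ := happrox (k + 1)
    set A : WittVector p R := WittVector.mk p (fun j => if j ≤ k then a j else 0) with hA
    set B : WittVector p R := WittVector.mk p b with hB
    have hghA : ∀ j ≤ k, WittVector.ghostMap A j = x j := by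
      intro j hj
      rw [hA, ghostMap_mk]
      rw [ha j hj]
      exact (gh_congr p fun n hn => by rw [if_pos (le_trans hn hj)]).symm
    have hC : ∀ j < k + 1, (p : R) ^ 0 * gh p (B - A).coeff j = 0 := by
      intro j hj
      have hj' : j ≤ k := by omega
      have : WittVector.mk p (B - A).coeff = B - A := by
        apply WittVector.ext; intro i; rw [WittVector.coeff_mk]
      rw [pow_zero, one_mul, ← ghostMap_mk, this, map_sub]
      show WittVector.ghostMap B j - WittVector.ghostMap A j = 0
      rw [hghA j hj', hB, ghostMap_mk, ← hb j (by omega)]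
      exact sub_self _
    obtain ⟨r, hr⟩ := key p hp0 (k + 1) 0 (B - A).coeff hC
    rw [pow_zero, one_mul, add_zero] at hr
    refine ⟨fun n => if n ≤ k then a n else r, fun n hn => if_pos hn, fun j hj => ?_⟩
    rcases Nat.lt_succ_iff_lt_or_eq.1 (Nat.lt_succ_of_le hj) with hj' | rfl
    · have hj'' : j ≤ k := by omega
      rw [ha j hj'']
      exact gh_congr p fun n hn => (if_pos (le_trans hn hj'')).symm
    -- j = k + 1
    · have hxk : x (k + 1) = WittVector.ghostMap A (k + 1) + (p : R) ^ (k + 1) * r := by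
        have hmkC : WittVector.mk p (B - A).coeff = B - A := by
          apply WittVector.ext; intro i; rw [WittVector.coeff_mk]
        have := hr
        rw [← ghostMap_mk, hmkC, map_sub] at this
        have h2 : WittVector.ghostMap B (k + 1) - WittVector.ghostMap A (k + 1)
            = (p : R) ^ (k + 1) * r := this
        have h3 : WittVector.ghostMap B (k + 1) = x (k + 1) := by
          rw [hB, ghostMap_mk, ← hb (k + 1) le_rfl]
        linear_combination h2 - h3
      rw [hxk, hA, ghostMap_mk]
      have hagree : ∀ n ∈ Finset.range (k + 1),
          (p : R) ^ n * (if n ≤ k then a n else (0 : R)) ^ p ^ (k + 1 - n)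
          = (p : R) ^ n * (if n ≤ k then a n else r) ^ p ^ (k + 1 - n) := by
        intro n hn
        have : n ≤ k := by simpa [Nat.lt_succ_iff] using hn
        rw [if_pos this, if_pos this]
      have e1 := Finset.sum_range_succ
        (fun n => (p : R) ^ n * (if n ≤ k then a n else (0 : R)) ^ p ^ (k + 1 - n)) (k + 1)
      have e2 := Finset.sum_range_succ
        (fun n => (p : R) ^ n * (if n ≤ k then a n else r) ^ p ^ (k + 1 - n)) (k + 1)
      show (∑ n ∈ Finset.range (k + 1 + 1),
            (p : R) ^ n * (if n ≤ k then a n else (0 : R)) ^ p ^ (k + 1 - n))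
          + (p : R) ^ (k + 1) * r
          = ∑ n ∈ Finset.range (k + 1 + 1),
            (p : R) ^ n * (if n ≤ k then a n else r) ^ p ^ (k + 1 - n)
      rw [e1, e2, Finset.sum_congr rfl hagree]
      have hnle : ¬ (k + 1 ≤ k) := by omega
      rw [if_neg hnle, if_neg hnle, Nat.sub_self, pow_zero, pow_one, pow_one]
      ring
  -- build the sequence by recursion
  have base : ∀ j ≤ 0, x j = gh p (fun _ => x 0) j := by
    intro j hj
    interval_cases j
    rw [gh_zero]
  let g : ∀ k : ℕ, {a : ℕ → R // ∀ j ≤ k, x j = gh p a j} := fun k =>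
    Nat.rec ⟨fun _ => x 0, base⟩
      (fun k prev => ⟨(step k prev.1 prev.2).choose, (step k prev.1 prev.2).choose_spec.2⟩) k
  have gagree : ∀ k n, n ≤ k → (g k).1 n = (g n).1 n := by
    intro k
    induction k with
    | zero => intro n hn; interval_cases n; rfl
    | succ k ih =>
      intro n hn
      rcases Nat.lt_succ_iff_lt_or_eq.1 (Nat.lt_succ_of_le hn) with h | rfl
      · have hn' : n ≤ k := by omega
        have : (g (k + 1)).1 n = (g k).1 n :=
          (step k (g k).1 (g k).2).choose_spec.1 n hn'
        rw [this, ih n hn']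
      · rfl
  refine ⟨fun n => (g n).1 n, fun k => ?_⟩
  have hsum : (∑ n ∈ Finset.range (k + 1), (Vmap p)^[n] (teich p ((g n).1 n))) k
      = gh p (fun n => (g n).1 n) k := by
    rw [Finset.sum_apply]
    rw [gh]
    refine Finset.sum_congr rfl fun n hn => ?_
    rw [iterV, if_pos (by simpa [Nat.lt_succ_iff] using hn)]
    rfl
  rw [hsum]
  rw [(g k).2 k le_rfl]
  exact gh_congr p fun n hn => gagree k n hn
end

section
/- Let p be a prime, A a commutative ring with no p-torsion, and suppose (x_0, x_1, x_2, ...) ∈ X(A) ⊆ A^ℕ has x_0 = 0. Then (x_0, x_1, ...) ∈ V(X(A)); in particular every element of X(A) with first coordinate zero is divisible by p coordinatewise after a shift: there is y ∈ X(A) with p·(0, y_0, y_1, ...) = (x_0, x_1, ...). -/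
/-!
`X(A)` is the closure of the image of the ghost map `W(A) → A^ℕ`: the generators `V^n⟨a⟩` are
the ghost vectors of `V^n [a]`, and every Witt vector is `∑ V^n [a_n]`, convergent in the
`V`-adic topology. A ghost vector `ghost w` approximating `x` with `x_0 = 0` has `w_0 = 0`, so
`w = V u` and `p · (ghost u)_i = x_{i+1}` for small `i`. As `A` has no `p`-torsion, this pins
down `(ghost u)_i`, so these coordinates stabilise to a sequence `y` which is again a limit of
ghost vectors and satisfies `V y = x`.
-/

open WittVector PiNat

theorem mem_closure_iff_forall_exists_eq_of_lt {E : Type*} [TopologicalSpace E]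
    [DiscreteTopology E] {s : Set (ℕ → E)} {x : ℕ → E} :
    x ∈ closure s ↔ ∀ n, ∃ z ∈ s, ∀ i < n, z i = x i := by
  rw [(isTopologicalBasis_cylinders fun _ => E).mem_closure_iff]
  constructor
  · intro h n
    obtain ⟨z, hz, hzs⟩ := h _ ⟨x, n, rfl⟩ (self_mem_cylinder x n)
    exact ⟨z, hzs, mem_cylinder_iff.1 hz⟩
  · rintro h _ ⟨y, n, rfl⟩ hx
    obtain ⟨z, hzs, hz⟩ := h n
    rw [← mem_cylinder_iff_eq.1 hx]
    exact ⟨z, mem_cylinder_iff.2 hz, hzs⟩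

theorem Vmap_iterate_apply_of_lt (p : ℕ) {R : Type*} [CommRing R] {n i : ℕ} (hi : i < n)
    (z : ℕ → R) : (Vmap p)^[n] z i = 0 := by
  induction n generalizing i with
  | zero => omega
  | succ n ih =>
    rw [Function.iterate_succ_apply']
    cases i with
    | zero => rfl
    | succ i => exact (congrArg _ (ih (by omega))).trans (mul_zero _)

def xrGenerators (p : ℕ) (R : Type*) [CommRing R] : Set (ℕ → R) :=
  {x : ℕ → R | ∃ n r, x = (Vmap p)^[n] (teich p r)}

section Witt

variable (p : ℕ) [Fact p.Prime] {A : Type*} [CommRing A]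

local notation "𝕎" => WittVector p

theorem ghostMap_teichmuller (r : A) : ghostMap (teichmuller p r) = teich p r :=
  funext fun n => ghostComponent_teichmuller p r n

theorem ghostMap_verschiebung (w : 𝕎 A) :
    ghostMap (verschiebung w) = Vmap p (ghostMap w) := by
  funext k
  cases k with
  | zero => exact ghostComponent_zero_verschiebung w
  | succ n => exact ghostComponent_verschiebung w n

theorem ghostMap_iterate_verschiebung (n : ℕ) (w : 𝕎 A) :
    ghostMap (verschiebung^[n] w) = (Vmap p)^[n] (ghostMap w) := by
  induction n with
  | zero => rfl
  | succ n ih =>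
    rw [Function.iterate_succ_apply', Function.iterate_succ_apply', ghostMap_verschiebung, ih]

theorem ghostMap_apply_zero (w : 𝕎 A) : ghostMap w 0 = w.coeff 0 := by
  simp [ghostMap_apply, ghostComponent_apply, wittPolynomial_zero]

theorem exists_eq_verschiebung_of_coeff_zero {w : 𝕎 A} (h : w.coeff 0 = 0) :
    ∃ u, w = verschiebung u :=
  ⟨_, eq_iterate_verschiebung (n := 1) (by simpa using h)⟩

theorem exists_eq_teichmuller_add_verschiebung (w : 𝕎 A) :
    ∃ u, w = teichmuller p (w.coeff 0) + verschiebung u := by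
  have h := add_coeff_zero (w - teichmuller p (w.coeff 0)) (teichmuller p (w.coeff 0))
  rw [sub_add_cancel, teichmuller_coeff_zero, right_eq_add] at h
  obtain ⟨u, hu⟩ := exists_eq_verschiebung_of_coeff_zero p h
  exact ⟨u, eq_add_of_sub_eq' hu⟩

theorem exists_ghostMap_eq_Vmap {w : 𝕎 A} (h : ghostMap w 0 = 0) :
    ∃ u : 𝕎 A, ghostMap w = Vmap p (ghostMap u) := by
  rw [ghostMap_apply_zero] at h
  obtain ⟨u, rfl⟩ := exists_eq_verschiebung_of_coeff_zero p h
  exact ⟨u, ghostMap_verschiebung p u⟩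

theorem closure_xrGenerators_le_range :
    AddSubgroup.closure (xrGenerators p A)
      ≤ AddMonoidHom.range ((ghostMap : 𝕎 A →+* (ℕ → A)) : 𝕎 A →+ (ℕ → A)) := by
  rw [AddSubgroup.closure_le]
  rintro z ⟨n, r, rfl⟩
  exact ⟨verschiebung^[n] (teichmuller p r), by
    rw [← ghostMap_teichmuller p r, ← ghostMap_iterate_verschiebung]; rfl⟩

theorem exists_ghostMap_sub_iterate_verschiebung_mem_closure (n : ℕ) (w : 𝕎 A) :
    ∃ u : 𝕎 A, ghostMap w - ghostMap (verschiebung^[n] u)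
      ∈ AddSubgroup.closure (xrGenerators p A) := by
  induction n with
  | zero => exact ⟨w, by simp⟩
  | succ n ih =>
    obtain ⟨u, hu⟩ := ih
    obtain ⟨v, hv⟩ := exists_eq_teichmuller_add_verschiebung p u
    set c := u.coeff 0
    refine ⟨v, ?_⟩
    have hsplit : ghostMap w - ghostMap (verschiebung^[n + 1] v)
        = (ghostMap w - ghostMap (verschiebung^[n] u))
          + ghostMap (verschiebung^[n] (teichmuller p c)) := by
      rw [hv, iterate_map_add, map_add, Function.iterate_succ_apply]
      abel
    rw [hsplit]
    refine AddSubgroup.add_mem _ hu (AddSubgroup.subset_closure ⟨n, c, ?_⟩)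
    rw [ghostMap_iterate_verschiebung, ghostMap_teichmuller]

theorem mem_XR_iff {x : ℕ → A} :
    x ∈ XR p A ↔ ∀ n, ∃ w : 𝕎 A, ∀ i < n, ghostMap w i = x i := by
  let _ : TopologicalSpace A := ⊥
  have : DiscreteTopology A := ⟨rfl⟩
  change x ∈ closure (AddSubgroup.closure (xrGenerators p A) : Set (ℕ → A)) ↔ _
  rw [mem_closure_iff_forall_exists_eq_of_lt]
  refine forall_congr' fun n => ⟨?_, ?_⟩
  · rintro ⟨z, hz, hzx⟩
    obtain ⟨w, rfl⟩ := closure_xrGenerators_le_range p hz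
    exact ⟨w, hzx⟩
  · rintro ⟨w, hwx⟩
    obtain ⟨u, hu⟩ := exists_ghostMap_sub_iterate_verschiebung_mem_closure p n w
    refine ⟨_, hu, fun i hi => ?_⟩
    rw [Pi.sub_apply, ghostMap_iterate_verschiebung, Vmap_iterate_apply_of_lt p hi, sub_zero,
      hwx i hi]

end Witt

theorem stmt_19 (p : ℕ) (hp : p.Prime) (A : Type*) [CommRing A]
    (htf : ∀ a : A, p • a = 0 → a = 0)
    (x : ℕ → A) (hx : x ∈ XR p A) (h0 : x 0 = 0) :
    ∃ y ∈ XR p A, Vmap p y = x := by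
  have := Fact.mk hp
  have cancel (a b : A) (h : (p : A) * a = p * b) : a = b :=
    sub_eq_zero.mp (htf _ (by rw [nsmul_eq_mul, mul_sub, h, sub_self]))
  have approx (n : ℕ) : ∃ u : WittVector p A, ∀ i < n, (p : A) * ghostMap u i = x (i + 1) := by
    obtain ⟨w, hw⟩ := (mem_XR_iff p).1 hx (n + 1)
    obtain ⟨u, hu⟩ := exists_ghostMap_eq_Vmap p (by rw [hw 0 n.succ_pos, h0])
    exact ⟨u, fun i hi => (congrFun hu.symm (i + 1)).trans (hw (i + 1) (by omega))⟩
  choose u hu using approx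
  refine ⟨fun i => ghostMap (u (i + 1)) i, (mem_XR_iff p).2 fun n => ⟨u n, fun i hi =>
    cancel _ _ ((hu n i hi).trans (hu (i + 1) i i.lt_succ_self).symm)⟩, ?_⟩
  funext k
  cases k with
  | zero => exact h0.symm
  | succ i => exact hu (i + 1) i i.lt_succ_self
end
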